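/- arXiv:2205.00277 — 4 statements merged into one kernel-verified Lean document; each statement's English description precedes it below -/
import Mathlib

section
/- Let A and B be multisets over a type with decidable equality, and let c be a mode of A + B, i.e. for every element x the multiplicity of x in A + B is at most the multiplicity of c in A + B. If c does not occur in A, then c is a mode of B, i.e. for every element x the multiplicity of x in B is at most the multiplicity of c in B. -/
/-- Krizanc et al.: if `c` is a mode of `A + B` and `c` does not occur in `A`,
then `c` is a mode of `B`. -/
theorem mode_of_add_of_not_mem {α : Type*} [DecidableEq α] (A B : Multiset α) (c : α)
    (hmode : ∀ x, (A + B).count x ≤ (A + B).count c)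
    (hc : c ∉ A) :
    ∀ x, B.count x ≤ B.count c := by
  intro x
  calc B.count x ≤ A.count x + B.count x := Nat.le_add_left _ _
    _ = (A + B).count x := (Multiset.count_add x A B).symm
    _ ≤ (A + B).count c := hmode x
    _ = B.count c := by rw [Multiset.count_add, Multiset.count_eq_zero.mpr hc, zero_add]
end

section
/- Let p = (p₁, p₂) ∈ ℝ², let v = (v₁, v₂, v₃) ∈ ℝ³ satisfy max(|p₁ − v₁|, |p₂ − v₂|) ≤ v₃, and let d = (d₁, d₂, d₃) ∈ ℝ³. Then every point of the ray {v + λd : λ ≥ 0} lies above the pyramid ∇_p, i.e. max(|p₁ − (v₁ + λd₁)|, |p₂ − (v₂ + λd₂)|) ≤ v₃ + λd₃ for all λ ≥ 0, if and only if −d₃ ≤ d₁ ≤ d₃ and −d₃ ≤ d₂ ≤ d₃. -/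
section LinearGrowth

variable {K : Type*} [Field K] [LinearOrder K] [IsStrictOrderedRing K]

theorem nonpos_of_forall_nonneg_mul_le {k C : K} (h : ∀ l : K, 0 ≤ l → l * k ≤ C) : k ≤ 0 := by
  by_contra! hk
  have hC := h ((|C| + 1) / k) (by positivity)
  rw [div_mul_cancel₀ _ hk.ne'] at hC
  linarith [le_abs_self C]

/-- Along a ray `l ↦ a - l * d` the distance grows like `l * |d|`, so it can stay below
`c + l * e` only if `|d| ≤ e`. -/
theorem abs_le_of_forall_abs_sub_mul_le_add_mul {a c d e : K}
    (h : ∀ l : K, 0 ≤ l → |a - l * d| ≤ c + l * e) : |d| ≤ e := by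
  suffices |d| - e ≤ 0 by linarith
  refine nonpos_of_forall_nonneg_mul_le (C := c + |a|) fun l hl => ?_
  have hgrowth : |l * d| - |a| ≤ |a - l * d| := by
    simpa only [abs_sub_comm] using abs_sub_abs_le_abs_sub (l * d) a
  rw [abs_mul, abs_of_nonneg hl] at hgrowth
  linarith [h l hl]

theorem abs_sub_mul_le_add_mul {a c d e l : K} (ha : |a| ≤ c) (hd : |d| ≤ e) (hl : 0 ≤ l) :
    |a - l * d| ≤ c + l * e :=
  calc |a - l * d| ≤ |a| + |l * d| := abs_sub _ _
    _ = |a| + l * |d| := by rw [abs_mul, abs_of_nonneg hl]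
    _ ≤ c + l * e := add_le_add ha (mul_le_mul_of_nonneg_left hd hl)

end LinearGrowth

/-- Unbounded-edge case of the lemma characterizing when a simplex lies above a
pyramid: given `v` above `∇_p`, the whole ray `{v + λd : λ ≥ 0}` lies above `∇_p`
iff `−d₃ ≤ d₁ ≤ d₃` and `−d₃ ≤ d₂ ≤ d₃`. -/
theorem ray_above_pyramid_iff (p₁ p₂ v₁ v₂ v₃ d₁ d₂ d₃ : ℝ)
    (hv : max |p₁ - v₁| |p₂ - v₂| ≤ v₃) :
    (∀ l : ℝ, 0 ≤ l →
        max |p₁ - (v₁ + l * d₁)| |p₂ - (v₂ + l * d₂)| ≤ v₃ + l * d₃) ↔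
      (-d₃ ≤ d₁ ∧ d₁ ≤ d₃ ∧ -d₃ ≤ d₂ ∧ d₂ ≤ d₃) := by
  simp only [← sub_sub, max_le_iff] at hv ⊢
  constructor
  · intro h
    have h₁ := abs_le_of_forall_abs_sub_mul_le_add_mul fun l hl => (h l hl).1
    have h₂ := abs_le_of_forall_abs_sub_mul_le_add_mul fun l hl => (h l hl).2
    rw [abs_le] at h₁ h₂
    exact ⟨h₁.1, h₁.2, h₂.1, h₂.2⟩
  · rintro ⟨h₁, h₁', h₂, h₂'⟩ l hl
    exact ⟨abs_sub_mul_le_add_mul hv.1 (abs_le.2 ⟨h₁, h₁'⟩) hl,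
      abs_sub_mul_le_add_mul hv.2 (abs_le.2 ⟨h₂, h₂'⟩) hl⟩
end

section
/- Let ε ∈ (0, 1), let i be a natural number, and let f* and f_c be real numbers. If f* < (1/(1 − ε))^(i/2 + 1) + 1 and f_c ≥ (1/(1 − ε))^(i/2) + 1, then f_c ≥ (1 − ε)·f*. -/
theorem mul_lt_of_lt_div_add_one {q x a b : ℝ} (hq₀ : 0 < q) (hq₁ : q ≤ 1)
    (ha : a < x / q + 1) (hb : x + 1 ≤ b) : q * a < b :=
  calc q * a < q * (x / q + 1) := mul_lt_mul_of_pos_left ha hq₀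
    _ = x + q := by field_simp
    _ ≤ b := by linarith

/-- Arithmetic core of the approximation guarantee: if
`f* < (1/(1−ε))^(i/2+1) + 1` and `f_c ≥ (1/(1−ε))^(i/2) + 1`, then
`f_c ≥ (1−ε)·f*`.  The exponents are real exponents. -/
theorem approx_mode_arith (ε : ℝ) (hε : ε ∈ Set.Ioo (0 : ℝ) 1) (i : ℕ)
    (fstar fc : ℝ)
    (h1 : fstar < (1 / (1 - ε)) ^ ((i : ℝ) / 2 + 1) + 1)
    (h2 : fc ≥ (1 / (1 - ε)) ^ ((i : ℝ) / 2) + 1) :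
    fc ≥ (1 - ε) * fstar := by
  obtain ⟨hε₀, hε₁⟩ := hε
  have hq : 0 < 1 - ε := sub_pos.mpr hε₁
  rw [Real.rpow_add_one (by positivity), mul_one_div] at h1
  exact (mul_lt_of_lt_div_add_one hq (by linarith) h1 h2).le
end

section
/- Let R and B be finite multisets over a linearly ordered type, let r be an element of R and b an element of B with b < r, and set ℓ = (the number of elements of B strictly smaller than b) + (the number of elements of R strictly smaller than r) + 1. If k is an integer with 1 ≤ k < ℓ, then the k-th smallest element of the multiset R + B equals the k-th smallest element of the multiset B + R^<, where R^< is the submultiset of elements of R that are strictly smaller than r. -/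
/-! A sorted list begins with its elements below `r`, so the `i`-th smallest element of a
multiset with more than `i` elements below `r` is the `i`-th smallest of those elements. Both
`R + B` and `B + R^<` have the same elements below `r`, and at least `ℓ - 1 ≥ k` of them
(those of `R^<` and the elements of `B` below `b < r`). -/

theorem List.Pairwise.filter_lt_append_filter_not_lt {α : Type*} [LinearOrder α] {l : List α}
    (hl : l.Pairwise (· ≤ ·)) (r : α) :
    l.filter (· < r) ++ l.filter (fun x => !(x < r)) = l := by
  refine List.Perm.eq_of_pairwise' ?_ hl (List.filter_append_perm _ l)
  refine List.pairwise_append.2 ⟨hl.filter _, hl.filter _, fun a ha c hc => ?_⟩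
  simp only [List.mem_filter, decide_eq_true_eq, Bool.not_eq_true', decide_eq_false_iff_not]
    at ha hc
  exact (ha.2.trans_le (not_lt.1 hc.2)).le

theorem Multiset.sort_filter_lt {α : Type*} [LinearOrder α] (s : Multiset α) (r : α) :
    (s.filter (· < r)).sort (· ≤ ·) = (s.sort (· ≤ ·)).filter (· < r) := by
  refine List.Perm.eq_of_pairwise' (pairwise_sort _ _) ((pairwise_sort _ _).filter _) ?_
  rw [← coe_eq_coe, sort_eq, ← filter_coe, sort_eq]

theorem Multiset.getD_sort_eq_getD_sort_filter_lt {α : Type*} [LinearOrder α] (s : Multiset α)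
    (r d : α) {i : ℕ} (hi : i < card (s.filter (· < r))) :
    (s.sort (· ≤ ·)).getD i d = ((s.filter (· < r)).sort (· ≤ ·)).getD i d := by
  have hi' : i < ((s.sort (· ≤ ·)).filter (· < r)).length := by
    rwa [← sort_filter_lt, length_sort]
  rw [sort_filter_lt, ← List.getD_append _ _ d i hi',
    (pairwise_sort _ _).filter_lt_append_filter_not_lt]

theorem kth_smallest_discard_upper_general {α : Type*} [LinearOrder α]
    (R B : Multiset α) (r b : α) (hbr : b < r)
    (k : ℕ) (hk1 : 1 ≤ k)
    (hk2 : k < Multiset.card (B.filter (· < b)) +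
        Multiset.card (R.filter (· < r)) + 1) :
    ((R + B).sort (· ≤ ·)).getD (k - 1) r =
      ((B + R.filter (· < r)).sort (· ≤ ·)).getD (k - 1) r := by
  have hfilter : (B + R.filter (· < r)).filter (· < r) = (R + B).filter (· < r) := by
    rw [Multiset.filter_add, Multiset.filter_filter, add_comm, Multiset.filter_add]
    simp only [and_self]
  have hcard : k - 1 < Multiset.card ((R + B).filter (· < r)) := by
    have hB : Multiset.card (B.filter (· < b)) ≤ Multiset.card (B.filter (· < r)) :=
      Multiset.card_le_card (Multiset.monotone_filter_right B fun _ hx => hx.trans hbr)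
    rw [Multiset.filter_add, Multiset.card_add]
    omega
  rw [Multiset.getD_sort_eq_getD_sort_filter_lt _ r r hcard, ← hfilter,
    ← Multiset.getD_sort_eq_getD_sort_filter_lt _ r r (hfilter ▸ hcard)]

/-- Second case of the rank-query recursion: with `b < r` and
`ℓ = |{x ∈ B : x < b}| + |{x ∈ R : x < r}| + 1`, if `1 ≤ k < ℓ` then the `k`-th
smallest element of `R + B` equals the `k`-th smallest element of `B + R^<`,
where `R^<` consists of the elements of `R` strictly smaller than `r`.
(The `k`-th smallest element, 1-indexed, is the `k`-th entry of the sorted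
enumeration of the multiset.) -/
theorem kth_smallest_discard_upper {α : Type*} [LinearOrder α]
    (R B : Multiset α) (r b : α) (hr : r ∈ R) (hb : b ∈ B) (hbr : b < r)
    (k : ℕ) (hk1 : 1 ≤ k)
    (hk2 : k < Multiset.card (B.filter (· < b)) +
        Multiset.card (R.filter (· < r)) + 1) :
    ((R + B).sort (· ≤ ·)).getD (k - 1) r =
      ((B + R.filter (· < r)).sort (· ≤ ·)).getD (k - 1) r :=
  kth_smallest_discard_upper_general R B r b hbr k hk1 hk2
end
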